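/- Let f : Fin M → ℝ^N with indices partitioned into K pairwise disjoint pools I_1, …, I_K, each of cardinality L, and let P₂ : ℝ^N → ℝ^K be the ℓ² pooling operator (P₂ x)_k = (∑_{j∈I_k} ⟨x, f_j⟩²)^{1/2}. Let Q₂ be the collection of all families f' obtained from f by replacing, for each pool k, the vectors (f_j)_{j∈I_k} by (U_k applied to them), i.e., enumerating I_k = {j_1,…,j_L}, f'_{j_a} = ∑_{b=1}^L (U_k)_{a,b} f_{j_b} for some orthogonal L×L matrix U_k. Then for all x, x' ∈ ℝ^N, A₂ · d(x,x') ≤ ‖P₂(x) − P₂(x')‖₂, where A₂ = inf over F' ∈ Q₂ of the minimum over Ω ⊆ Fin M of sqrt(λ₋(F'_Ω)² + λ₋(F'_{Ωᶜ})²). -/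

import Mathlib

/-!
Fix a pool with coefficient vectors `a = (⟪x, f_j⟫)_j` and `b = (⟪x', f_j⟫)_j` in `ℝ^L`, and let `R`
be the reflection exchanging `‖a‖ • b` and `‖b‖ • a`. In an orthonormal eigenbasis of `R` (rows of
an orthogonal `U`), the eigenvalues `ε_i = ±1` satisfy `ε_i (U b)_i = (U (R b))_i`, and `a`, `R b`
lie on a common ray, so `∑_i ((U a)_i - ε_i (U b)_i)² = ‖a - R b‖² = (‖a‖ - ‖b‖)²`. Summing over
the pools and letting `Ω` be the indices with `ε = 1`, the squared pooling distance becomes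
`∑_{Ω} ⟪x - x', f'_j⟫² + ∑_{Ωᶜ} ⟪x + x', f'_j⟫²`, which is at least
`(λ₋(F'_Ω)² + λ₋(F'_{Ωᶜ})²) d(x, x')²`.
-/

open scoped BigOperators RealInnerProductSpace
open Finset Matrix

noncomputable section

/-- Lower frame bound of the subfamily of `g` indexed by `Ω`. -/
def lowerFrameBound {N M : ℕ} (g : Fin M → EuclideanSpace ℝ (Fin N))
    (Ω : Finset (Fin M)) : ℝ :=
  sSup {c : ℝ | 0 ≤ c ∧ ∀ x : EuclideanSpace ℝ (Fin N),
    c * ‖x‖ ≤ Real.sqrt (∑ i ∈ Ω, ⟪x, g i⟫ ^ 2)}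

/-- Sign-invariant distance `d(x,x') = min(‖x−x'‖, ‖x+x'‖)`. -/
def sdist {N : ℕ} (x x' : EuclideanSpace ℝ (Fin N)) : ℝ :=
  min ‖x - x'‖ ‖x + x'‖

/-- The ℓ² pooling operator: `(P₂ x)_k = (∑_{j∈I_k} ⟨x, f_j⟩²)^{1/2}`. -/
def pool2 {N M K : ℕ} (f : Fin M → EuclideanSpace ℝ (Fin N))
    (I : Fin K → Finset (Fin M)) (x : EuclideanSpace ℝ (Fin N)) : Fin K → ℝ :=
  fun k => Real.sqrt (∑ j ∈ I k, ⟪x, f j⟫ ^ 2)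

/-- `f'` is obtained from `f` by applying, in each pool `I_k` (enumerated by `e k`),
an orthogonal `L×L` matrix `U_k` to the vectors of the pool. -/
def InQ2 {N M K L : ℕ} (f f' : Fin M → EuclideanSpace ℝ (Fin N))
    (I : Fin K → Finset (Fin M)) : Prop :=
  ∃ (e : Fin K → Fin L → Fin M) (U : Fin K → Matrix (Fin L) (Fin L) ℝ),
    (∀ k, Function.Injective (e k)) ∧
    (∀ k a, e k a ∈ I k) ∧
    (∀ k, (U k)ᵀ * U k = 1) ∧
    (∀ k a, f' (e k a) = ∑ b, U k a b • f (e k b))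

section Reflection

variable {E : Type*} [NormedAddCommGroup E] [InnerProductSpace ℝ E]

theorem Submodule.inner_reflection_left (K : Submodule ℝ E) [K.HasOrthogonalProjection]
    (x y : E) : ⟪K.reflection x, y⟫ = ⟪x, K.reflection y⟫ := by
  conv_lhs => rw [← K.reflection_reflection y]
  exact K.reflection.inner_map_map x (K.reflection y)

theorem sameRay_reflection_orthogonal_span (a b : E) :
    SameRay ℝ a ((ℝ ∙ (‖a‖ • b - ‖b‖ • a))ᗮ.reflection b) := by
  set R := (ℝ ∙ (‖a‖ • b - ‖b‖ • a))ᗮ.reflection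
  have h : R (‖a‖ • b) = ‖b‖ • a :=
    Submodule.reflection_sub (by simp only [norm_smul, norm_norm, mul_comm])
  rw [sameRay_iff_norm_smul_eq, LinearIsometryEquiv.norm_map, ← h, map_smul]

variable [FiniteDimensional ℝ E] {n : ℕ}

theorem Submodule.exists_orthonormalBasis_reflection_eq_sign_smul (K : Submodule ℝ E)
    [K.HasOrthogonalProjection] (hn : Module.finrank ℝ E = n) :
    ∃ (v : OrthonormalBasis (Fin n) ℝ E) (ε : Fin n → ℝ),
      (∀ i, ε i = 1 ∨ ε i = -1) ∧ ∀ i, K.reflection (v i) = ε i • v i := by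
  have hsymm : (K.reflection.toLinearMap).IsSymmetric := K.inner_reflection_left
  refine ⟨hsymm.eigenvectorBasis hn, hsymm.eigenvalues hn, fun i => ?_,
    hsymm.apply_eigenvectorBasis hn⟩
  set v := hsymm.eigenvectorBasis hn i
  have hv : K.reflection v = hsymm.eigenvalues hn i • v := hsymm.apply_eigenvectorBasis hn i
  have hsq : (hsymm.eigenvalues hn i ^ 2 - 1) • v = 0 := by
    have := K.reflection_reflection v
    rw [hv, map_smul, hv, smul_smul, ← sq] at this
    rw [sub_smul, this, one_smul, sub_self]
  have hv0 : v ≠ 0 := (hsymm.eigenvectorBasis hn).orthonormal.ne_zero i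
  exact sq_eq_one_iff.mp (sub_eq_zero.mp ((smul_eq_zero.mp hsq).resolve_right hv0))

theorem exists_orthonormalBasis_sum_sq_inner_sub_sign_mul (a b : E)
    (hn : Module.finrank ℝ E = n) :
    ∃ (v : OrthonormalBasis (Fin n) ℝ E) (ε : Fin n → ℝ), (∀ i, ε i = 1 ∨ ε i = -1) ∧
      ∑ i, (⟪v i, a⟫ - ε i * ⟪v i, b⟫) ^ 2 = (‖a‖ - ‖b‖) ^ 2 := by
  set K := (ℝ ∙ (‖a‖ • b - ‖b‖ • a))ᗮ
  obtain ⟨v, ε, hε, hv⟩ := K.exists_orthonormalBasis_reflection_eq_sign_smul hn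
  refine ⟨v, ε, hε, ?_⟩
  have hterm : ∀ i, ⟪v i, a⟫ - ε i * ⟪v i, b⟫ = ⟪v i, a - K.reflection b⟫ := fun i => by
    rw [inner_sub_right, ← K.inner_reflection_left, hv, real_inner_smul_left]
  rw [sum_congr rfl fun i _ => congrArg (· ^ 2) (hterm i), v.sum_sq_inner_right,
    (sameRay_reflection_orthogonal_span a b).norm_sub, LinearIsometryEquiv.norm_map, sq_abs]

end Reflection

theorem OrthonormalBasis.transpose_mul_self_of_rows {n : ℕ}
    (v : OrthonormalBasis (Fin n) ℝ (EuclideanSpace ℝ (Fin n))) :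
    (Matrix.of fun i j => v i j)ᵀ * Matrix.of (fun i j => v i j) = 1 := by
  have h := (Matrix.mem_orthogonalGroup_iff (Fin n) ℝ).mp
    ((EuclideanSpace.basisFun (Fin n) ℝ).toMatrix_orthonormalBasis_mem_orthogonal v)
  convert h using 2 <;> ext i j <;> simp [Module.Basis.toMatrix_apply]

theorem exists_orthogonal_sum_sq_mulVec_sub_sign_mul {n : ℕ} (a b : Fin n → ℝ) :
    ∃ (U : Matrix (Fin n) (Fin n) ℝ) (ε : Fin n → ℝ), Uᵀ * U = 1 ∧
      (∀ i, ε i = 1 ∨ ε i = -1) ∧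
      ∑ i, ((U *ᵥ a) i - ε i * (U *ᵥ b) i) ^ 2 = (√(∑ i, a i ^ 2) - √(∑ i, b i ^ 2)) ^ 2 := by
  obtain ⟨v, ε, hε, hsum⟩ := exists_orthonormalBasis_sum_sq_inner_sub_sign_mul
    (WithLp.toLp 2 a : EuclideanSpace ℝ (Fin n)) (WithLp.toLp 2 b) finrank_euclideanSpace_fin
  refine ⟨Matrix.of fun i j => v i j, ε, v.transpose_mul_self_of_rows, hε, ?_⟩
  simpa [EuclideanSpace.norm_eq, PiLp.inner_apply, mulVec, dotProduct, mul_comm] using hsum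

theorem sdist_nonneg {N : ℕ} (x x' : EuclideanSpace ℝ (Fin N)) : 0 ≤ sdist x x' :=
  le_min (norm_nonneg _) (norm_nonneg _)

section FrameBound

variable {N M : ℕ}

theorem lowerFrameBound_nonneg (g : Fin M → EuclideanSpace ℝ (Fin N)) (Ω : Finset (Fin M)) :
    0 ≤ lowerFrameBound g Ω := by
  unfold lowerFrameBound
  by_cases hb : BddAbove {c : ℝ | 0 ≤ c ∧ ∀ x : EuclideanSpace ℝ (Fin N),
      c * ‖x‖ ≤ √(∑ i ∈ Ω, ⟪x, g i⟫ ^ 2)}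
  · exact le_csSup hb ⟨le_rfl, fun x => by simp⟩
  · rw [Real.sSup_of_not_bddAbove hb]

theorem lowerFrameBound_mul_norm_le (g : Fin M → EuclideanSpace ℝ (Fin N))
    (Ω : Finset (Fin M)) (x : EuclideanSpace ℝ (Fin N)) :
    lowerFrameBound g Ω * ‖x‖ ≤ √(∑ i ∈ Ω, ⟪x, g i⟫ ^ 2) := by
  rcases (norm_nonneg x).eq_or_lt with hx | hx
  · simp [← hx]
  rw [← le_div_iff₀ hx]
  exact Real.sSup_le (fun c hc => (le_div_iff₀ hx).mpr (hc.2 x)) (by positivity)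

theorem sq_lowerFrameBound_add_mul_sq_sdist_le (g : Fin M → EuclideanSpace ℝ (Fin N))
    (Ω : Finset (Fin M)) (x x' : EuclideanSpace ℝ (Fin N)) :
    (lowerFrameBound g Ω ^ 2 + lowerFrameBound g Ωᶜ ^ 2) * sdist x x' ^ 2 ≤
      ∑ j ∈ Ω, ⟪x - x', g j⟫ ^ 2 + ∑ j ∈ Ωᶜ, ⟪x + x', g j⟫ ^ 2 := by
  have hd := sdist_nonneg x x'
  have bound : ∀ (Ω' : Finset (Fin M)) (y : EuclideanSpace ℝ (Fin N)), sdist x x' ≤ ‖y‖ →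
      (lowerFrameBound g Ω' * sdist x x') ^ 2 ≤ ∑ j ∈ Ω', ⟪y, g j⟫ ^ 2 := fun Ω' y hy => by
    refine (Real.le_sqrt (mul_nonneg (lowerFrameBound_nonneg g Ω') hd)
      (sum_nonneg fun _ _ => sq_nonneg _)).mp ?_
    exact (mul_le_mul_of_nonneg_left hy (lowerFrameBound_nonneg g Ω')).trans
      (lowerFrameBound_mul_norm_le g Ω' y)
  have h₁ := bound Ω (x - x') (min_le_left _ _)
  have h₂ := bound Ωᶜ (x + x') (min_le_right _ _)
  linear_combination h₁ + h₂

end FrameBound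

theorem sum_sq_inner_sub_add_sum_sq_inner_add {ι E : Type*} [Fintype ι] [DecidableEq ι]
    [NormedAddCommGroup E] [InnerProductSpace ℝ E] (g : ι → E) (ε : ι → ℝ)
    (hε : ∀ i, ε i = 1 ∨ ε i = -1) (x x' : E) :
    ∑ j ∈ univ.filter (ε · = 1), ⟪x - x', g j⟫ ^ 2 +
        ∑ j ∈ (univ.filter (ε · = 1))ᶜ, ⟪x + x', g j⟫ ^ 2 =
      ∑ j, (⟪x, g j⟫ - ε j * ⟪x', g j⟫) ^ 2 := by
  rw [← sum_add_sum_compl (univ.filter (ε · = 1))]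
  congr 1 <;> refine sum_congr rfl fun j hj => ?_
  · rw [(mem_filter.mp hj).2, inner_sub_left, one_mul]
  · have : ε j = -1 := (hε j).resolve_left fun h => mem_compl.mp hj (by simp [h])
    rw [this, inner_add_left]
    ring

theorem exists_equiv_prod_of_partition {κ α : Type*} {L : ℕ} (I : κ → Finset α)
    (hdisj : ∀ k k', k ≠ k' → Disjoint (I k) (I k')) (hcard : ∀ k, (I k).card = L)
    (hcover : ∀ j, ∃ k, j ∈ I k) :
    ∃ Φ : κ × Fin L ≃ α, ∀ k i, Φ (k, i) ∈ I k := by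
  classical
  set e := fun k => ((I k).equivFinOfCardEq (hcard k)).symm
  refine ⟨Equiv.ofBijective (fun p => e p.1 p.2) ⟨?_, fun j => ?_⟩, fun k i => (e k i).2⟩
  · rintro ⟨k, i⟩ ⟨k', i'⟩ (h : (e k i : α) = e k' i')
    obtain rfl : k = k' := by_contra fun hk =>
      disjoint_left.mp (hdisj k k' hk) (e k i).2 (by rw [h]; exact (e k' i').2)
    simpa using (e k).injective (Subtype.ext h)
  · obtain ⟨k, hk⟩ := hcover j
    exact ⟨(k, (e k).symm ⟨j, hk⟩), by simp⟩

theorem sum_pool_eq_sum_fin {κ α β : Type*} [AddCommMonoid β] {L : ℕ} (I : κ → Finset α)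
    (hcard : ∀ k, (I k).card = L) (Φ : κ × Fin L ≃ α) (hΦ : ∀ k i, Φ (k, i) ∈ I k)
    (k : κ) (g : α → β) : ∑ j ∈ I k, g j = ∑ i, g (Φ (k, i)) := by
  set ι : Fin L ↪ α := ⟨fun i => Φ (k, i), fun i i' h => by simpa using Φ.injective h⟩
  have hI : univ.map ι = I k :=
    eq_of_subset_of_card_le (fun j hj => by obtain ⟨i, -, rfl⟩ := mem_map.mp hj; exact hΦ k i)
      (by simp [hcard])
  rw [← hI, sum_map]
  rfl

theorem exists_inQ2_sum_sq_inner_eq_sum_sq_pool2_sub {N M K L : ℕ}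
    (f : Fin M → EuclideanSpace ℝ (Fin N)) (I : Fin K → Finset (Fin M))
    (hdisj : ∀ k k', k ≠ k' → Disjoint (I k) (I k')) (hcard : ∀ k, (I k).card = L)
    (hcover : ∀ j : Fin M, ∃ k, j ∈ I k) (x x' : EuclideanSpace ℝ (Fin N)) :
    ∃ (f' : Fin M → EuclideanSpace ℝ (Fin N)) (Ω : Finset (Fin M)), InQ2 (L := L) f f' I ∧
      ∑ j ∈ Ω, ⟪x - x', f' j⟫ ^ 2 + ∑ j ∈ Ωᶜ, ⟪x + x', f' j⟫ ^ 2 =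
        ∑ k, (pool2 f I x k - pool2 f I x' k) ^ 2 := by
  obtain ⟨Φ, hΦ⟩ := exists_equiv_prod_of_partition I hdisj hcard hcover
  choose U ε hU hε hkey using fun k => exists_orthogonal_sum_sq_mulVec_sub_sign_mul
    (fun i => ⟪x, f (Φ (k, i))⟫) (fun i => ⟪x', f (Φ (k, i))⟫)
  set F : Fin K × Fin L → EuclideanSpace ℝ (Fin N) := fun p => ∑ b, U p.1 p.2 b • f (Φ (p.1, b))
  set εM : Fin M → ℝ := fun j => ε (Φ.symm j).1 (Φ.symm j).2
  have hinj : ∀ k, Function.Injective fun i => Φ (k, i) := fun k i i' h => by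
    simpa using Φ.injective h
  refine ⟨fun j => F (Φ.symm j), univ.filter (εM · = 1),
    ⟨fun k i => Φ (k, i), U, hinj, hΦ, hU, fun k i => by simp [F]⟩, ?_⟩
  rw [sum_sq_inner_sub_add_sum_sq_inner_add _ εM (fun j => hε _ _), ← Φ.sum_comp,
    Fintype.sum_prod_type]
  refine sum_congr rfl fun k _ => ?_
  simp only [εM, F, Equiv.symm_apply_apply, pool2, sum_pool_eq_sum_fin I hcard Φ hΦ, ← hkey k]
  congr! 3 with i <;> simp [inner_sum, real_inner_smul_right, mulVec, dotProduct]

/-- lower Lipschitz bound for the ℓ² pooling operator, with constant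
`A₂ = inf_{F' ∈ Q₂} min_Ω sqrt(λ₋(F'_Ω)² + λ₋(F'_{Ωᶜ})²)`. -/
theorem pool2_lower_lipschitz {N M K L : ℕ} (f : Fin M → EuclideanSpace ℝ (Fin N))
    (I : Fin K → Finset (Fin M))
    (hdisj : ∀ k k', k ≠ k' → Disjoint (I k) (I k'))
    (hcard : ∀ k, (I k).card = L)
    (hcover : ∀ j : Fin M, ∃ k, j ∈ I k) :
    ∀ x x' : EuclideanSpace ℝ (Fin N),
      sInf {r : ℝ | ∃ (f' : Fin M → EuclideanSpace ℝ (Fin N)) (Ω : Finset (Fin M)),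
            InQ2 (L := L) f f' I ∧
            r = Real.sqrt (lowerFrameBound f' Ω ^ 2 + lowerFrameBound f' Ωᶜ ^ 2)}
          * sdist x x'
        ≤ Real.sqrt (∑ k, (pool2 f I x k - pool2 f I x' k) ^ 2) := by
  intro x x'
  obtain ⟨f', Ω, hQ, hsum⟩ :=
    exists_inQ2_sum_sq_inner_eq_sum_sq_pool2_sub f I hdisj hcard hcover x x'
  have hd := sdist_nonneg x x'
  calc _ ≤ √(lowerFrameBound f' Ω ^ 2 + lowerFrameBound f' Ωᶜ ^ 2) * sdist x x' := by
        refine mul_le_mul_of_nonneg_right (csInf_le ?_ ⟨f', Ω, hQ, rfl⟩) hd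
        exact ⟨0, by rintro r ⟨_, _, _, rfl⟩; positivity⟩
    _ = √((lowerFrameBound f' Ω ^ 2 + lowerFrameBound f' Ωᶜ ^ 2) * sdist x x' ^ 2) := by
        rw [Real.sqrt_mul' _ (sq_nonneg _), Real.sqrt_sq hd]
    _ ≤ _ := Real.sqrt_le_sqrt (hsum ▸ sq_lowerFrameBound_add_mul_sq_sdist_le f' Ω x x')
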